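/- The unit square X = [0,1] × [0,1] equipped with the order topology induced by the lexicographic order admits no orbit expansive homeomorphism. -/

import Mathlib

open Set

/-- The `n`-th iterate (`n : ℤ`) of a homeomorphism `f`, as a function. -/
def Homeomorph.zpow {X : Type*} [TopologicalSpace X] (f : X ≃ₜ X) (n : ℤ) : X → X :=
  ⇑(f.toEquiv ^ n)

/-- `U = {U 0, …, U (l-1)}` is an o-expansive covering for the homeomorphism `f`:
it is a finite open cover such that any two points whose whole orbits stay
`U`-close must coincide. -/
def IsOExpansiveCover {X : Type*} [TopologicalSpace X] {l : ℕ} (f : X ≃ₜ X)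
    (U : Fin l → Set X) : Prop :=
  (∀ i, IsOpen (U i)) ∧ (⋃ i, U i) = Set.univ ∧
    ∀ x y : X, (∀ n : ℤ, ∃ i, f.zpow n x ∈ U i ∧ f.zpow n y ∈ U i) → x = y

/-- A homeomorphism is orbit expansive if it admits an o-expansive covering. -/
def OrbitExpansive {X : Type*} [TopologicalSpace X] (f : X ≃ₜ X) : Prop :=
  ∃ (l : ℕ) (U : Fin l → Set X), IsOExpansiveCover f U

/-- `U` is an r-expansivity covering for `f`: a finite open cover such that for every
open cover `V` and every sequence `k : ℤ → Fin n` there is `N` with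
`⋂_{|j| ≤ N} f^j(U (k j))` contained in a member of `V`. -/
def IsRExpansiveCover {X : Type*} [TopologicalSpace X] {n : ℕ} (f : X ≃ₜ X)
    (U : Fin n → Set X) : Prop :=
  (∀ i, IsOpen (U i)) ∧ (⋃ i, U i) = Set.univ ∧
    ∀ V : Set (Set X), (∀ v ∈ V, IsOpen v) → ⋃₀ V = Set.univ →
      ∀ k : ℤ → Fin n, ∃ N : ℕ, ∃ v ∈ V,
        (⋂ j ∈ Set.Icc (-(N : ℤ)) (N : ℤ), f.zpow j '' U (k j)) ⊆ v

/-- A homeomorphism is refinement expansive if it admits an r-expansivity covering. -/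
def RefinementExpansive {X : Type*} [TopologicalSpace X] (f : X ≃ₜ X) : Prop :=
  ∃ (n : ℕ) (U : Fin n → Set X), IsRExpansiveCover f U

/-- `U` is a uniform r-expansivity covering for `f`: `N` can be chosen uniformly in the
sequence `k`. -/
def IsUniformRExpansiveCover {X : Type*} [TopologicalSpace X] {n : ℕ} (f : X ≃ₜ X)
    (U : Fin n → Set X) : Prop :=
  (∀ i, IsOpen (U i)) ∧ (⋃ i, U i) = Set.univ ∧
    ∀ V : Set (Set X), (∀ v ∈ V, IsOpen v) → ⋃₀ V = Set.univ →
      ∃ N : ℕ, ∀ k : ℤ → Fin n, ∃ v ∈ V,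
        (⋂ j ∈ Set.Icc (-(N : ℤ)) (N : ℤ), f.zpow j '' U (k j)) ⊆ v

/-- A homeomorphism is uniformly refinement expansive if it admits a uniform
r-expansivity covering. -/
def UniformlyRefinementExpansive {X : Type*} [TopologicalSpace X] (f : X ≃ₜ X) : Prop :=
  ∃ (n : ℕ) (U : Fin n → Set X), IsUniformRExpansiveCover f U

/-!
Fix `b ≠ ⊤`. For each `a` the points `(a, b)` and `(a, ⊤)` are distinct, so some iterate `f ^ n`
sends them into no common member of the cover, and uncountably many `a` share one `n`. Such an
uncountable set has a point `c` approached by its own elements from the right, and in the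
lexicographic order every neighbourhood of `(c, ⊤)` contains the whole fibres over a right
neighbourhood of `c`. So the preimage under `f ^ n` of a cover member containing `f ^ n (c, ⊤)`
contains both `(t, b)` and `(t, ⊤)` for some `t` in the set.
-/

open Filter Topology

namespace Homeomorph

variable {X : Type*} [TopologicalSpace X]

theorem zpow_eq_coe_zpow (f : X ≃ₜ X) (n : ℤ) : f.zpow n = ⇑(f ^ n) :=
  congrArg DFunLike.coe
    (map_zpow (MonoidHom.mk' (toEquiv : (X ≃ₜ X) → Equiv.Perm X) fun _ _ ↦ rfl) f n).symm

theorem continuous_zpow (f : X ≃ₜ X) (n : ℤ) : Continuous (f.zpow n) :=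
  f.zpow_eq_coe_zpow n ▸ (f ^ n).continuous

end Homeomorph

theorem exists_not_countable_fiber {ι κ : Type*} [Uncountable ι] [Countable κ] (g : ι → κ) :
    ∃ k, ¬ (g ⁻¹' {k}).Countable := by
  by_contra! h
  have hunion := countable_iUnion h
  rw [← preimage_iUnion, iUnion_of_singleton, preimage_univ] at hunion
  exact not_countable_univ hunion

theorem Set.exists_mem_nhdsWithin_inter_Ioi_neBot_of_not_countable {α : Type*} [LinearOrder α]
    [TopologicalSpace α] [OrderTopology α] [SecondCountableTopology α] {s : Set α}
    (hs : ¬ s.Countable) : ∃ c ∈ s, (𝓝[s ∩ Ioi c] c).NeBot := by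
  by_contra! h
  refine hs ((countable_setOfPred_isolated_right_within (s := s)).mono fun x hx ↦ ?_)
  exact ⟨hx, h x hx⟩

theorem not_orbitExpansive_of_unseparated_pairs {X ι : Type*} [TopologicalSpace X]
    [Uncountable ι] (x y : ι → X) (hxy : ∀ a, x a ≠ y a)
    (h : ∀ S : Set ι, ¬ S.Countable → ∀ 𝒰 : Set (Set X), (∀ u ∈ 𝒰, IsOpen u) → ⋃₀ 𝒰 = univ →
      ∃ a ∈ S, ∃ u ∈ 𝒰, x a ∈ u ∧ y a ∈ u)
    (f : X ≃ₜ X) : ¬ OrbitExpansive f := by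
  rintro ⟨l, U, hopen, hcover, hexp⟩
  have hsep : ∀ a, ∃ n : ℤ, ∀ i, ¬ (f.zpow n (x a) ∈ U i ∧ f.zpow n (y a) ∈ U i) := by
    intro a
    by_contra! hclose
    exact hxy a (hexp _ _ hclose)
  choose n hn using hsep
  obtain ⟨m, hm⟩ := exists_not_countable_fiber n
  obtain ⟨a, rfl, _, ⟨i, rfl⟩, hxa, hya⟩ := h _ hm (range fun i ↦ f.zpow m ⁻¹' U i)
    (forall_mem_range.2 fun i ↦ (hopen i).preimage (f.continuous_zpow m))
    (by rw [sUnion_range, ← preimage_iUnion, hcover, preimage_univ])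
  exact hn a i ⟨hxa, hya⟩

namespace Prod.Lex

variable {α β : Type*} [LinearOrder α] [TopologicalSpace α] [OrderTopology α]
  [LinearOrder β] [OrderTop β] [TopologicalSpace (α ×ₗ β)] [OrderTopology (α ×ₗ β)]

theorem eventually_nhdsGT_forall_mem_of_mem_nhds_top {c : α} {u : Set (α ×ₗ β)}
    (hu : u ∈ 𝓝 (toLex (c, ⊤))) : ∀ᶠ t in 𝓝[>] c, ∀ b : β, toLex (t, b) ∈ u := by
  by_cases hc : IsMax c
  · simp [hc.Ioi_eq]
  obtain ⟨e, hce⟩ := not_isMax_iff.1 hc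
  obtain ⟨w, hw, hwu⟩ :=
    exists_Ico_subset_of_mem_nhds hu ⟨toLex (e, ⊤), toLex_lt_toLex.2 (.inl hce)⟩
  have hcw : c < (ofLex w).1 := (lt_iff.1 hw).resolve_right fun h ↦ not_top_lt h.2
  filter_upwards [Ioo_mem_nhdsGT hcw] with t ht b
  exact hwu ⟨(toLex_lt_toLex.2 (.inl ht.1)).le, toLex_lt_toLex.2 (.inl ht.2)⟩

theorem not_orbitExpansive [SecondCountableTopology α] [Uncountable α] [Nontrivial β]
    (f : α ×ₗ β ≃ₜ α ×ₗ β) : ¬ OrbitExpansive f := by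
  obtain ⟨b, hb⟩ := exists_ne (⊤ : β)
  refine not_orbitExpansive_of_unseparated_pairs (fun a ↦ toLex (a, b)) (fun a ↦ toLex (a, ⊤))
    (by simp [hb]) (fun S hS 𝒰 hopen hcover ↦ ?_) f
  obtain ⟨c, -, hc⟩ := exists_mem_nhdsWithin_inter_Ioi_neBot_of_not_countable hS
  obtain ⟨u, hu𝒰, hcu⟩ := mem_sUnion.1 (hcover ▸ mem_univ (toLex (c, ⊤)))
  have hfib := eventually_nhdsGT_forall_mem_of_mem_nhds_top ((hopen u hu𝒰).mem_nhds hcu)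
  obtain ⟨t, ⟨htS, -⟩, htu⟩ := hc.nonempty_of_mem
    (inter_mem self_mem_nhdsWithin (nhdsWithin_mono c inter_subset_right hfib))
  exact ⟨t, htS, u, hu𝒰, htu b, htu ⊤⟩

end Prod.Lex

/-- Remark 2.8: the unit square with the lexicographic order topology admits no
orbit expansive homeomorphism. -/
theorem lexSquare_no_orbitExpansive :
    letI X := Set.Icc (0 : ℝ) 1 ×ₗ Set.Icc (0 : ℝ) 1
    letI : TopologicalSpace X := Preorder.topology X
    ∀ f : X ≃ₜ X, ¬ OrbitExpansive f := by
  intro f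
  let _ : TopologicalSpace (Icc (0 : ℝ) 1 ×ₗ Icc (0 : ℝ) 1) := Preorder.topology _
  have : OrderTopology (Icc (0 : ℝ) 1 ×ₗ Icc (0 : ℝ) 1) := ⟨rfl⟩
  have : Uncountable (Icc (0 : ℝ) 1) := by
    simp [← not_countable_iff, countable_coe_iff]
  exact Prod.Lex.not_orbitExpansive f
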